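/- arXiv:1907.03219 — 2 statements merged into one kernel-verified Lean document; each statement's English description precedes it below -/
import Mathlib

section
/- If every point in a nonempty bounded set 𝓛 = { x ∈ 𝒦 : e₁ᵀx = 1 } (with 𝒦 a closed convex cone) has quadratic value bounded above by some β* (i.e., β* > xᵀQ₀x for all x ∈ 𝓛), then the matrix β* e₁e₁ᵀ - Q₀ is strictly copositive on 𝒦: (t, x̄)ᵀ(β* e₁e₁ᵀ - Q₀)(t, x̄) > 0 for all nonzero (t, x̄) ∈ 𝒦, provided that (0, x̄) ∈ 𝒦 implies x̄ = 0. -/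
open Matrix

/-!
A nonzero `w ∈ K` has `w 0 > 0`, so `(w 0)⁻¹ • w` lies on the slice `z 0 = 1`, where the
quadratic form of `Q` is below `β`. Scaling back by the homogeneity of quadratic forms gives
`wᵀ Q w < β (w 0)² = wᵀ (β e₀e₀ᵀ) w`.
-/

theorem smul_dotProduct_mulVec_smul {R n : Type*} [CommSemiring R] [Fintype n]
    (Q : Matrix n n R) (c : R) (w : n → R) :
    (c • w) ⬝ᵥ Q *ᵥ (c • w) = c * c * (w ⬝ᵥ Q *ᵥ w) := by
  rw [mulVec_smul, smul_dotProduct, dotProduct_smul, smul_eq_mul, smul_eq_mul, mul_assoc]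

theorem dotProduct_smul_vecMulVec_single_sub_mulVec {R n : Type*} [CommRing R] [Fintype n]
    [DecidableEq n] (β : R) (Q : Matrix n n R) (w : n → R) (i : n) :
    w ⬝ᵥ (β • vecMulVec (Pi.single i 1) (Pi.single i 1) - Q) *ᵥ w
      = β * (w i * w i) - w ⬝ᵥ Q *ᵥ w := by
  rw [sub_mulVec, dotProduct_sub, smul_mulVec, dotProduct_smul, vecMulVec_mulVec,
    single_dotProduct, one_mul, op_smul_eq_smul, dotProduct_smul, dotProduct_single, mul_one,
    smul_eq_mul, smul_eq_mul]

theorem dotProduct_mulVec_lt_of_inv_smul {𝕜 n : Type*} [Field 𝕜] [LinearOrder 𝕜]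
    [IsStrictOrderedRing 𝕜] [Fintype n] (Q : Matrix n n 𝕜) {β : 𝕜} {w : n → 𝕜} {i : n}
    (hw : 0 < w i) (h : ((w i)⁻¹ • w) ⬝ᵥ Q *ᵥ ((w i)⁻¹ • w) < β) :
    w ⬝ᵥ Q *ᵥ w < β * (w i * w i) := by
  rw [smul_dotProduct_mulVec_smul, ← mul_inv, inv_mul_lt_iff₀ (mul_pos hw hw)] at h
  rwa [mul_comm]

theorem stmt13_general (k : ℕ) (K : Set (Fin (k + 1) → ℝ))
    (hcone : ∀ x ∈ K, ∀ t : ℝ, 0 ≤ t → t • x ∈ K)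
    (h0 : ∀ x ∈ K, 0 ≤ x 0)
    (hrec : ∀ x ∈ K, x 0 = 0 → x = 0)
    (Q : Matrix (Fin (k + 1)) (Fin (k + 1)) ℝ)
    (β : ℝ) (hβ : ∀ z ∈ K, z 0 = 1 → z ⬝ᵥ Q.mulVec z < β) :
    ∀ w ∈ K, w ≠ 0 →
      0 < w ⬝ᵥ (β • vecMulVec (Pi.single 0 1) (Pi.single 0 1) - Q).mulVec w := by
  intro w hw hw_ne
  have hw0 : 0 < w 0 := (h0 w hw).lt_of_ne fun h => hw_ne (hrec w hw h.symm)
  have hz : (w 0)⁻¹ • w ∈ K := hcone w hw _ (inv_nonneg.mpr hw0.le)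
  have hz0 : ((w 0)⁻¹ • w) 0 = 1 := by simp [hw0.ne']
  rw [dotProduct_smul_vecMulVec_single_sub_mulVec, sub_pos]
  exact dotProduct_mulVec_lt_of_inv_smul Q hw0 (hβ _ hz hz0)

theorem stmt13 (k : ℕ) (K : Set (Fin (k + 1) → ℝ)) (hKc : IsClosed K)
    (hKconv : Convex ℝ K) (hcone : ∀ x ∈ K, ∀ t : ℝ, 0 ≤ t → t • x ∈ K)
    (h0 : ∀ x ∈ K, 0 ≤ x 0)
    (hrec : ∀ x ∈ K, x 0 = 0 → x = 0)
    (hne : ({z ∈ K | z 0 = 1}).Nonempty)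
    (hbdd : Bornology.IsBounded {z ∈ K | z 0 = 1})
    (Q : Matrix (Fin (k + 1)) (Fin (k + 1)) ℝ) (hQ : Q.IsSymm)
    (β : ℝ) (hβ : ∀ z ∈ K, z 0 = 1 → z ⬝ᵥ Q.mulVec z < β) :
    ∀ w ∈ K, w ≠ 0 →
      0 < w ⬝ᵥ (β • vecMulVec (Pi.single 0 1) (Pi.single 0 1) - Q).mulVec w :=
  stmt13_general k K hcone h0 hrec Q β hβ
end

section
/- Under the optimality condition of the no-show model, the feasible values of the dual variable yᵢ are confined to the finite set 𝒴ᵢ = [-d₀, -d₀ + n - i]_ℤ ∪ [C, C + n - i]_ℤ: if yₙ ∈ {-d₀, C} and for each i ∈ [n-1] either yᵢ = -d₀ or yᵢ = y_{i+1} + λ_{i+1} with λ_{i+1} ∈ {0,1}, then yᵢ ∈ 𝒴ᵢ for all i ∈ [n]. -/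
def IsOffsetWithin (a : ℝ) (k : ℕ) (x : ℝ) : Prop :=
  ∃ m : ℕ, m ≤ k ∧ x = a + m

theorem isOffsetWithin_self (a : ℝ) (k : ℕ) : IsOffsetWithin a k a :=
  ⟨0, k.zero_le, by simp⟩

theorem IsOffsetWithin.add_zero_or_one {a x l : ℝ} {k : ℕ} (hx : IsOffsetWithin a k x)
    (hl : l = 0 ∨ l = 1) : IsOffsetWithin a (k + 1) (x + l) := by
  obtain ⟨m, hm, rfl⟩ := hx
  rcases hl with rfl | rfl
  · exact ⟨m, by omega, by simp⟩
  · exact ⟨m + 1, by omega, by push_cast; ring⟩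

theorem stmt18 (n : ℕ) (hn : 1 ≤ n) (d₀ C : ℝ) (lam : Fin n → ℝ) (hlam : ∀ i, lam i = 0 ∨ lam i = 1)
    (y : Fin n → ℝ)
    (hyn : y ⟨n - 1, by omega⟩ = C ∨ y ⟨n - 1, by omega⟩ = -d₀)
    (hrec : ∀ i j : Fin n, (j : ℕ) = (i : ℕ) + 1 → (y i = -d₀ ∨ y i = y j + lam j)) :
    ∀ i : Fin n, (∃ m : ℕ, m ≤ n - 1 - (i : ℕ) ∧ y i = -d₀ + m) ∨
      (∃ m : ℕ, m ≤ n - 1 - (i : ℕ) ∧ y i = C + m) := by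
  -- backward induction on `i`, run as forward induction on the distance `k` to the last index
  suffices h : ∀ k : ℕ, ∀ i : Fin n, (i : ℕ) + k = n - 1 →
      IsOffsetWithin (-d₀) k (y i) ∨ IsOffsetWithin C k (y i) from
    fun i ↦ h (n - 1 - i) i (by omega)
  intro k
  induction k with
  | zero =>
    intro i hi
    rcases hyn with h | h <;> rw [show i = ⟨n - 1, by omega⟩ from Fin.ext hi, h]
    exacts [.inr (isOffsetWithin_self _ _), .inl (isOffsetWithin_self _ _)]
  | succ k ih =>
    intro i hi
    let j : Fin n := ⟨i + 1, by omega⟩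
    rcases hrec i j rfl with h | h <;> rw [h]
    · exact .inl (isOffsetWithin_self _ _)
    · exact (ih j (by simp only [j]; omega)).imp
        (·.add_zero_or_one (hlam j)) (·.add_zero_or_one (hlam j))
end
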